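/- (Top-level switch records path-count parity.) Let (V, s₀, s₁) be a switch graph with a level function ℓ : V → ℕ such that for every non-absorbing vertex v one has ℓ(s₀(v)) = ℓ(s₁(v)) = ℓ(v) + 1. Let s ∈ V with ℓ(s) = 0, let m ≥ 0, and run the Digicomp process releasing 2^m balls from s until all balls have stopped. Then for every non-absorbing vertex v with ℓ(v) = m, the final switch state at v equals N(v) mod 2, where N(v) is the number of functions b : {0, 1, …, m−1} → {0, 1} such that the sequence v₀ = s, v_{j+1} = s_{b(j)}(v_j) satisfies v_m = v. -/

import Mathlib

open scoped Classical

variable {V : Type*}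

/-- One step of the train: move along the edge given by the current switch state
and toggle the switch at the current vertex. -/
def step [DecidableEq V] (s0 s1 : V → V) (c : V × (V → Bool)) : V × (V → Bool) :=
  (if c.2 c.1 then s1 c.1 else s0 c.1, Function.update c.2 c.1 (!c.2 c.1))

/-- A vertex is absorbing if both of its out-edges are self-loops. -/
def Absorbing (s0 s1 : V → V) (v : V) : Prop := s0 v = v ∧ s1 v = v

/-- The step map of a ball: it stops (configuration frozen, no toggle) at an absorbing
vertex, and otherwise moves by the step map. -/
def stepD [DecidableEq V] (s0 s1 : V → V) (c : V × (V → Bool)) : V × (V → Bool) :=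
  if s0 c.1 = c.1 ∧ s1 c.1 = c.1 then c else step s0 s1 c

/-- The switch assignment left behind by one ball released at `st` with initial
assignment `σ`: the assignment when the ball first reaches an absorbing vertex
(junk value `σ` if it never does). -/
noncomputable def ballFinal [DecidableEq V] (s0 s1 : V → V) (st : V) (σ : V → Bool) :
    V → Bool :=
  if h : ∃ k, Absorbing s0 s1 ((stepD s0 s1)^[k] (st, σ)).1 then
    ((stepD s0 s1)^[Nat.find h] (st, σ)).2
  else σ

/-- The switch assignment after `i` balls have been released sequentially from `st`
(the first ball sees all switches `0`). -/
noncomputable def sigmaAfter [DecidableEq V] (s0 s1 : V → V) (st : V) :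
    ℕ → (V → Bool)
  | 0 => fun _ => false
  | i + 1 => ballFinal s0 s1 st (sigmaAfter s0 s1 st i)

/-- The configuration of the `i`-th ball (0-indexed) after `k` of its own steps. -/
noncomputable def ballConfig [DecidableEq V] (s0 s1 : V → V) (st : V) (i k : ℕ) :
    V × (V → Bool) :=
  (stepD s0 s1)^[k] (st, sigmaAfter s0 s1 st i)

/-- The walk from `st` determined by the branch choices `b`. -/
def walk (s0 s1 : V → V) (st : V) (b : ℕ → Bool) : ℕ → V
  | 0 => st
  | j + 1 => (if b j then s1 else s0) (walk s0 s1 st b j)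

/-- `N(v)`: the number of branch sequences `b : Fin L → Bool` whose walk from `st`
ends at `v` after `L` steps. -/
noncomputable def branchCount [DecidableEq V] (s0 s1 : V → V) (st : V) (L : ℕ)
    (v : V) : ℕ :=
  ((Finset.univ : Finset (Fin L → Bool)).filter
    (fun b => walk s0 s1 st (fun j => if h : j < L then b ⟨j, h⟩ else false) L = v)).card

section Aux

set_option linter.unusedSectionVars false
variable [Fintype V] [DecidableEq V] (s0 s1 : V → V)

lemma stepD_fixed {c : V × (V → Bool)} (h : Absorbing s0 s1 c.1) :
    stepD s0 s1 c = c := by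
  unfold Absorbing at h
  rw [stepD, if_pos h]

lemma stepD_not_fixed {c : V × (V → Bool)} (h : ¬ Absorbing s0 s1 c.1) :
    stepD s0 s1 c = step s0 s1 c := by
  unfold Absorbing at h
  rw [stepD, if_neg h]

lemma iterate_fixed_of_abs {c : V × (V → Bool)} (h : Absorbing s0 s1 c.1) :
    ∀ d, (stepD s0 s1)^[d] c = c := by
  intro d
  induction d with
  | zero => rfl
  | succ d ih => rw [Function.iterate_succ_apply, stepD_fixed s0 s1 h, ih]

lemma iterate_absorbed {c : V × (V → Bool)} {j k : ℕ} (hjk : j ≤ k)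
    (h : Absorbing s0 s1 (((stepD s0 s1)^[j] c).1)) :
    (stepD s0 s1)^[k] c = (stepD s0 s1)^[j] c := by
  obtain ⟨d, rfl⟩ := Nat.exists_eq_add_of_le hjk
  rw [Nat.add_comm, Function.iterate_add_apply, iterate_fixed_of_abs s0 s1 h]

variable (ℓ : V → ℕ)

lemma pos_level
    (hlev : ∀ v, ¬ Absorbing s0 s1 v → ℓ (s0 v) = ℓ v + 1 ∧ ℓ (s1 v) = ℓ v + 1)
    (c : V × (V → Bool)) :
    ∀ k, ¬ Absorbing s0 s1 (((stepD s0 s1)^[k] c).1) →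
      ℓ (((stepD s0 s1)^[k] c).1) = ℓ c.1 + k := by
  intro k
  induction k with
  | zero => intro _; rfl
  | succ k ih =>
    intro h
    have hk : ¬ Absorbing s0 s1 (((stepD s0 s1)^[k] c).1) := by
      intro habs
      exact h (by rw [iterate_absorbed s0 s1 (Nat.le_succ k) habs]; exact habs)
    rw [Function.iterate_succ_apply', stepD_not_fixed s0 s1 hk]
    have := hlev _ hk
    simp only [step]
    split
    · rw [this.2, ih hk]; omega
    · rw [this.1, ih hk]; omega

lemma pos_eq_level
    (hlev : ∀ v, ¬ Absorbing s0 s1 v → ℓ (s0 v) = ℓ v + 1 ∧ ℓ (s1 v) = ℓ v + 1)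
    (c : V × (V → Bool)) (k : ℕ) (v : V) (hv : ¬ Absorbing s0 s1 v)
    (h : ((stepD s0 s1)^[k] c).1 = v) : ℓ v = ℓ c.1 + k := by
  have := pos_level s0 s1 ℓ hlev c k (by rw [h]; exact hv)
  rw [h] at this; exact this

lemma exists_absorbing
    (hlev : ∀ v, ¬ Absorbing s0 s1 v → ℓ (s0 v) = ℓ v + 1 ∧ ℓ (s1 v) = ℓ v + 1)
    (c : V × (V → Bool)) :
    ∃ k, Absorbing s0 s1 (((stepD s0 s1)^[k] c).1) := by
  by_contra h
  push_neg at h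
  set B := Finset.univ.sup ℓ with hB
  have hle : ∀ x, ℓ x ≤ B := fun x => Finset.le_sup (Finset.mem_univ x)
  have := pos_level s0 s1 ℓ hlev c (B + 1) (h _)
  have h2 := hle (((stepD s0 s1)^[B + 1] c).1)
  omega


lemma snd_step_ne (c : V × (V → Bool)) (v : V) (hne : c.1 ≠ v) :
    (stepD s0 s1 c).2 v = c.2 v := by
  by_cases habs : Absorbing s0 s1 c.1
  · rw [stepD_fixed s0 s1 habs]
  · rw [stepD_not_fixed s0 s1 habs]
    exact Function.update_of_ne (Ne.symm hne) _ _

lemma snd_before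
    (hlev : ∀ v, ¬ Absorbing s0 s1 v → ℓ (s0 v) = ℓ v + 1 ∧ ℓ (s1 v) = ℓ v + 1)
    (c : V × (V → Bool)) (hc : ℓ c.1 = 0) (v : V) (hv : ¬ Absorbing s0 s1 v) :
    ∀ k, k ≤ ℓ v → ((stepD s0 s1)^[k] c).2 v = c.2 v := by
  intro k
  induction k with
  | zero => intro _; rfl
  | succ k ih =>
    intro hk
    have hne : ((stepD s0 s1)^[k] c).1 ≠ v := by
      intro h
      have := pos_eq_level s0 s1 ℓ hlev c k v hv h
      omega
    rw [Function.iterate_succ_apply', snd_step_ne s0 s1 _ v hne, ih (by omega)]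

lemma snd_after
    (hlev : ∀ v, ¬ Absorbing s0 s1 v → ℓ (s0 v) = ℓ v + 1 ∧ ℓ (s1 v) = ℓ v + 1)
    (c : V × (V → Bool)) (hc : ℓ c.1 = 0) (v : V) (hv : ¬ Absorbing s0 s1 v) :
    ∀ k, ℓ v < k →
      ((stepD s0 s1)^[k] c).2 v
        = if ((stepD s0 s1)^[ℓ v] c).1 = v then !(c.2 v) else c.2 v := by
  intro k
  induction k with
  | zero => omega
  | succ k ih =>
    intro hk
    rcases Nat.lt_or_ge (ℓ v) k with hlt | hge
    · have hne : ((stepD s0 s1)^[k] c).1 ≠ v := by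
        intro h
        have := pos_eq_level s0 s1 ℓ hlev c k v hv h
        omega
      rw [Function.iterate_succ_apply', snd_step_ne s0 s1 _ v hne, ih hlt]
    · have hkL : ℓ v = k := by omega
      rw [hkL]
      have h2 : ((stepD s0 s1)^[k] c).2 v = c.2 v :=
        snd_before s0 s1 ℓ hlev c hc v hv k (by omega)
      rw [Function.iterate_succ_apply']
      by_cases hp : ((stepD s0 s1)^[k] c).1 = v
      · have habs : ¬ Absorbing s0 s1 ((stepD s0 s1)^[k] c).1 := by rw [hp]; exact hv
        rw [stepD_not_fixed s0 s1 habs, if_pos hp]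
        simp only [step]
        rw [hp, Function.update_self, h2]
      · rw [snd_step_ne s0 s1 _ v hp, if_neg hp, h2]

lemma ballFinal_eq
    (hlev : ∀ v, ¬ Absorbing s0 s1 v → ℓ (s0 v) = ℓ v + 1 ∧ ℓ (s1 v) = ℓ v + 1)
    (st : V) (hst : ℓ st = 0) (σ : V → Bool) (v : V) (hv : ¬ Absorbing s0 s1 v) :
    ballFinal s0 s1 st σ v
      = if ((stepD s0 s1)^[ℓ v] (st, σ)).1 = v then !(σ v) else σ v := by
  have hex : ∃ k, Absorbing s0 s1 (((stepD s0 s1)^[k] (st, σ)).1) :=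
    exists_absorbing s0 s1 ℓ hlev (st, σ)
  rw [ballFinal, dif_pos hex]
  have hTabs := Nat.find_spec hex
  rcases le_or_gt (Nat.find hex) (ℓ v) with hle | hlt
  · have h1 : ((stepD s0 s1)^[Nat.find hex] (st, σ)).2 v = σ v :=
      snd_before s0 s1 ℓ hlev (st, σ) hst v hv _ hle
    have h2 : (stepD s0 s1)^[ℓ v] (st, σ) = (stepD s0 s1)^[Nat.find hex] (st, σ) :=
      iterate_absorbed s0 s1 hle hTabs
    rw [h1, h2, if_neg]
    intro hvv
    rw [hvv] at hTabs
    exact hv hTabs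
  · exact snd_after s0 s1 ℓ hlev (st, σ) hst v hv _ hlt


/-- Number of balls among the first `n` whose position after `L` steps is `v`. -/
noncomputable def pcount (st : V) (n L : ℕ) (v : V) : ℕ :=
  ((Finset.range n).filter (fun j => (ballConfig s0 s1 st j L).1 = v)).card

lemma pcount_succ (st : V) (n L : ℕ) (v : V) :
    pcount s0 s1 st (n + 1) L v
      = pcount s0 s1 st n L v
        + (if (ballConfig s0 s1 st n L).1 = v then 1 else 0) := by
  unfold pcount
  rw [Finset.range_add_one, Finset.filter_insert]
  split
  · rw [Finset.card_insert_of_notMem (by simp)]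
  · rfl

lemma sigmaAfter_parity
    (hlev : ∀ v, ¬ Absorbing s0 s1 v → ℓ (s0 v) = ℓ v + 1 ∧ ℓ (s1 v) = ℓ v + 1)
    (st : V) (hst : ℓ st = 0) (v : V) (hv : ¬ Absorbing s0 s1 v) :
    ∀ i, sigmaAfter s0 s1 st i v
      = decide (pcount s0 s1 st i (ℓ v) v % 2 = 1) := by
  intro i
  induction i with
  | zero => simp [sigmaAfter, pcount]
  | succ i ih =>
    show ballFinal s0 s1 st (sigmaAfter s0 s1 st i) v = _
    rw [ballFinal_eq s0 s1 ℓ hlev st hst _ v hv, ih, pcount_succ]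
    have hcfg : (stepD s0 s1)^[ℓ v] (st, sigmaAfter s0 s1 st i)
        = ballConfig s0 s1 st i (ℓ v) := rfl
    rw [hcfg]
    by_cases hp : (ballConfig s0 s1 st i (ℓ v)).1 = v
    · rw [if_pos hp, if_pos hp]
      by_cases h2 : pcount s0 s1 st i (ℓ v) v % 2 = 1
      · have h3 : ¬ ((pcount s0 s1 st i (ℓ v) v + 1) % 2 = 1) := by omega
        simp [h2, h3]
      · have h3 : (pcount s0 s1 st i (ℓ v) v + 1) % 2 = 1 := by omega
        simp [h2, h3]
    · rw [if_neg hp, if_neg hp]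
      simp

lemma ball_next
    (hlev : ∀ v, ¬ Absorbing s0 s1 v → ℓ (s0 v) = ℓ v + 1 ∧ ℓ (s1 v) = ℓ v + 1)
    (st : V) (hst : ℓ st = 0) (v : V) (hv : ¬ Absorbing s0 s1 v) (i : ℕ)
    (h : (ballConfig s0 s1 st i (ℓ v)).1 = v) :
    (ballConfig s0 s1 st i (ℓ v + 1)).1
      = if sigmaAfter s0 s1 st i v then s1 v else s0 v := by
  have hσ : (ballConfig s0 s1 st i (ℓ v)).2 v = sigmaAfter s0 s1 st i v :=
    snd_before s0 s1 ℓ hlev (st, sigmaAfter s0 s1 st i) hst v hv (ℓ v) le_rfl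
  have habs : ¬ Absorbing s0 s1 ((ballConfig s0 s1 st i (ℓ v)).1) := by
    rw [h]; exact hv
  have hstep : ballConfig s0 s1 st i (ℓ v + 1)
      = stepD s0 s1 (ballConfig s0 s1 st i (ℓ v)) := by
    unfold ballConfig
    exact Function.iterate_succ_apply' _ _ _
  rw [hstep, stepD_not_fixed s0 s1 habs]
  simp only [step]
  rw [h, hσ]


lemma alt_count (P : ℕ → Prop) [DecidablePred P] (n : ℕ) :
    (((Finset.range n).filter
        (fun j => P j ∧ ((Finset.range j).filter P).card % 2 = 0)).card
      = (((Finset.range n).filter P).card + 1) / 2)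
    ∧ (((Finset.range n).filter
        (fun j => P j ∧ ((Finset.range j).filter P).card % 2 = 1)).card
      = ((Finset.range n).filter P).card / 2) := by
  induction n with
  | zero => simp
  | succ n ih =>
    obtain ⟨ih1, ih2⟩ := ih
    rw [Finset.range_add_one, Finset.filter_insert, Finset.filter_insert,
      Finset.filter_insert]
    by_cases hP : P n
    · by_cases hpar : ((Finset.range n).filter P).card % 2 = 0
      · have e0 : P n ∧ ((Finset.range n).filter P).card % 2 = 0 := ⟨hP, hpar⟩
        have e1 : ¬ (P n ∧ ((Finset.range n).filter P).card % 2 = 1) := by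
          rintro ⟨-, h⟩; omega
        rw [if_pos e0, if_neg e1, if_pos hP,
          Finset.card_insert_of_notMem (by simp),
          Finset.card_insert_of_notMem (by simp)]
        constructor <;> omega
      · have e0 : ¬ (P n ∧ ((Finset.range n).filter P).card % 2 = 0) := by
          rintro ⟨-, h⟩; omega
        have e1 : P n ∧ ((Finset.range n).filter P).card % 2 = 1 := ⟨hP, by omega⟩
        rw [if_neg e0, if_pos e1, if_pos hP,
          Finset.card_insert_of_notMem (by simp),
          Finset.card_insert_of_notMem (by simp)]
        constructor <;> omega
    · have e0 : ¬ (P n ∧ ((Finset.range n).filter P).card % 2 = 0) := by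
        rintro ⟨h, -⟩; exact hP h
      have e1 : ¬ (P n ∧ ((Finset.range n).filter P).card % 2 = 1) := by
        rintro ⟨h, -⟩; exact hP h
      rw [if_neg e0, if_neg e1, if_neg hP]
      exact ⟨ih1, ih2⟩


lemma alt_count' (st : V) (L : ℕ) (v : V) (n : ℕ) :
    (((Finset.range n).filter
        (fun j => (ballConfig s0 s1 st j L).1 = v ∧ pcount s0 s1 st j L v % 2 = 0)).card
      = (pcount s0 s1 st n L v + 1) / 2)
    ∧ (((Finset.range n).filter
        (fun j => (ballConfig s0 s1 st j L).1 = v ∧ pcount s0 s1 st j L v % 2 = 1)).card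
      = pcount s0 s1 st n L v / 2) :=
  alt_count (fun j => (ballConfig s0 s1 st j L).1 = v) n

lemma ball_step_frozen (st : V) (j L : ℕ) (h : Absorbing s0 s1 ((ballConfig s0 s1 st j L).1)) :
    ballConfig s0 s1 st j (L + 1) = ballConfig s0 s1 st j L := by
  have : ballConfig s0 s1 st j (L + 1) = stepD s0 s1 (ballConfig s0 s1 st j L) := by
    unfold ballConfig
    exact Function.iterate_succ_apply' _ _ _
  rw [this, stepD_fixed s0 s1 h]

lemma fiber_step
    (hlev : ∀ v, ¬ Absorbing s0 s1 v → ℓ (s0 v) = ℓ v + 1 ∧ ℓ (s1 v) = ℓ v + 1)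
    (st : V) (hst : ℓ st = 0) (n L : ℕ) (v w : V)
    (heven : pcount s0 s1 st n L v % 2 = 0) :
    ((Finset.range n).filter
        (fun j => (ballConfig s0 s1 st j (L + 1)).1 = w
          ∧ (ballConfig s0 s1 st j L).1 = v)).card
      = pcount s0 s1 st n L v / 2
          * ((if s0 v = w then 1 else 0) + (if s1 v = w then 1 else 0)) := by
  by_cases hva : Absorbing s0 s1 v
  · have hstep : ∀ j, (ballConfig s0 s1 st j L).1 = v →
        (ballConfig s0 s1 st j (L + 1)).1 = v := by
      intro j hj
      rw [ball_step_frozen s0 s1 st j L (by rw [hj]; exact hva), hj]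
    by_cases hvw : v = w
    · subst hvw
      have hcong : ∀ j ∈ Finset.range n,
          (((ballConfig s0 s1 st j (L + 1)).1 = v
              ∧ (ballConfig s0 s1 st j L).1 = v)
            ↔ (ballConfig s0 s1 st j L).1 = v) :=
        fun j _ => ⟨fun h => h.2, fun h => ⟨hstep j h, h⟩⟩
      rw [Finset.filter_congr hcong, if_pos hva.1, if_pos hva.2]
      show pcount s0 s1 st n L v = _
      omega
    · have h0 : ¬ (s0 v = w) := by rw [hva.1]; exact hvw
      have h1 : ¬ (s1 v = w) := by rw [hva.2]; exact hvw
      rw [if_neg h0, if_neg h1, Finset.filter_false_of_mem, Finset.card_empty]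
      · simp
      · rintro j - ⟨hw', hv'⟩
        exact hvw (by rw [← hstep j hv', hw'])
  · by_cases hex : ∃ j, (ballConfig s0 s1 st j L).1 = v
    case neg =>
      push_neg at hex
      have hcnt : pcount s0 s1 st n L v = 0 := by
        unfold pcount
        rw [Finset.card_eq_zero, Finset.filter_eq_empty_iff]
        intro j _
        exact hex j
      rw [hcnt, Finset.filter_false_of_mem, Finset.card_empty]
      · simp
      · rintro j - ⟨-, hv'⟩
        exact hex j hv'
    case pos =>
      obtain ⟨j0, hj0⟩ := hex
      have hLv : ℓ v = L := by
        have := pos_eq_level s0 s1 ℓ hlev (st, sigmaAfter s0 s1 st j0) L v hva hj0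
        simpa [hst] using this
      have key : ∀ j, (ballConfig s0 s1 st j L).1 = v →
          (ballConfig s0 s1 st j (L + 1)).1
            = if pcount s0 s1 st j L v % 2 = 1 then s1 v else s0 v := by
        intro j hj
        have hj' : (ballConfig s0 s1 st j (ℓ v)).1 = v := by rw [hLv]; exact hj
        have hb := ball_next s0 s1 ℓ hlev st hst v hva j hj'
        rw [sigmaAfter_parity s0 s1 ℓ hlev st hst v hva j, hLv] at hb
        simpa using hb
      by_cases h0 : s0 v = w <;> by_cases h1 : s1 v = w
      · have hcong : ∀ j ∈ Finset.range n,
            (((ballConfig s0 s1 st j (L + 1)).1 = w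
                ∧ (ballConfig s0 s1 st j L).1 = v)
              ↔ (ballConfig s0 s1 st j L).1 = v) := by
          refine fun j _ => ⟨fun h => h.2, fun h => ⟨?_, h⟩⟩
          rw [key j h]
          split
          · exact h1
          · exact h0
        rw [Finset.filter_congr hcong, if_pos h0, if_pos h1]
        show pcount s0 s1 st n L v = _
        omega
      · have hcong : ∀ j ∈ Finset.range n,
            (((ballConfig s0 s1 st j (L + 1)).1 = w
                ∧ (ballConfig s0 s1 st j L).1 = v)
              ↔ ((ballConfig s0 s1 st j L).1 = v
                ∧ pcount s0 s1 st j L v % 2 = 0)) := by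
          refine fun j _ => ⟨fun h => ⟨h.2, ?_⟩, fun h => ⟨?_, h.1⟩⟩
          · obtain ⟨hw', hj⟩ := h
            rw [key j hj] at hw'
            by_cases hpar : pcount s0 s1 st j L v % 2 = 1
            · rw [if_pos hpar] at hw'
              exact absurd hw' h1
            · omega
          · rw [key j h.1, if_neg (by omega : ¬ pcount s0 s1 st j L v % 2 = 1)]
            exact h0
        rw [Finset.filter_congr hcong, (alt_count' s0 s1 st L v n).1,
          if_pos h0, if_neg h1]
        omega
      · have hcong : ∀ j ∈ Finset.range n,
            (((ballConfig s0 s1 st j (L + 1)).1 = w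
                ∧ (ballConfig s0 s1 st j L).1 = v)
              ↔ ((ballConfig s0 s1 st j L).1 = v
                ∧ pcount s0 s1 st j L v % 2 = 1)) := by
          refine fun j _ => ⟨fun h => ⟨h.2, ?_⟩, fun h => ⟨?_, h.1⟩⟩
          · obtain ⟨hw', hj⟩ := h
            rw [key j hj] at hw'
            by_cases hpar : pcount s0 s1 st j L v % 2 = 1
            · exact hpar
            · rw [if_neg hpar] at hw'
              exact absurd hw' h0
          · rw [key j h.1, if_pos h.2]
            exact h1
        rw [Finset.filter_congr hcong, (alt_count' s0 s1 st L v n).2,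
          if_neg h0, if_pos h1]
        omega
      · rw [if_neg h0, if_neg h1, Finset.filter_false_of_mem, Finset.card_empty]
        · simp
        · rintro j - ⟨hw', hj⟩
          rw [key j hj] at hw'
          split at hw'
          · exact h1 hw'
          · exact h0 hw'


lemma walk_eq_of_agree (st : V) (b b' : ℕ → Bool) :
    ∀ k, (∀ j, j < k → b j = b' j) → walk s0 s1 st b k = walk s0 s1 st b' k := by
  intro k
  induction k with
  | zero => intro _; rfl
  | succ k ih =>
    intro h
    simp only [walk]
    rw [ih (fun j hj => h j (by omega)), h k (by omega)]

lemma sum_walk_fiber (st : V) (L : ℕ) (F : V → ℕ) :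
    (∑ b' : Fin L → Bool,
        F (walk s0 s1 st (fun j => if h : j < L then b' ⟨j, h⟩ else false) L))
      = ∑ v : V, branchCount s0 s1 st L v * F v := by
  rw [← Finset.sum_fiberwise Finset.univ
    (fun b' : Fin L → Bool =>
      walk s0 s1 st (fun j => if h : j < L then b' ⟨j, h⟩ else false) L)
    (fun b' : Fin L → Bool =>
      F (walk s0 s1 st (fun j => if h : j < L then b' ⟨j, h⟩ else false) L))]
  refine Finset.sum_congr rfl (fun v _ => ?_)
  rw [Finset.sum_congr rfl
    (fun b' hb' => by rw [(Finset.mem_filter.mp hb').2] :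
      ∀ b' ∈ Finset.univ.filter (fun b' : Fin L → Bool =>
        walk s0 s1 st (fun j => if h : j < L then b' ⟨j, h⟩ else false) L = v),
      F (walk s0 s1 st (fun j => if h : j < L then b' ⟨j, h⟩ else false) L) = F v)]
  rw [Finset.sum_const, smul_eq_mul]
  rfl

set_option maxHeartbeats 800000 in
lemma branchCount_succ (st : V) (L : ℕ) (w : V) :
    branchCount s0 s1 st (L + 1) w
      = ∑ v : V, branchCount s0 s1 st L v *
          ((if s0 v = w then 1 else 0) + (if s1 v = w then 1 else 0)) := by
  rw [branchCount, Finset.card_filter]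
  rw [← Equiv.sum_comp
    (Fin.insertNthEquiv (fun _ : Fin (L + 1) => Bool) (Fin.last L))]
  rw [Fintype.sum_prod_type]
  have hpt : ∀ (c : Bool) (b' : Fin L → Bool),
      walk s0 s1 st
        (fun j => if h : j < L + 1 then
          ((Fin.insertNthEquiv (fun _ : Fin (L + 1) => Bool) (Fin.last L))
            (c, b')) ⟨j, h⟩ else false) (L + 1)
      = (if c then s1 else s0)
          (walk s0 s1 st (fun j => if h : j < L then b' ⟨j, h⟩ else false) L) := by
    intro c b'
    have hins : (Fin.insertNthEquiv (fun _ : Fin (L + 1) => Bool) (Fin.last L)) (c, b')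
        = (Fin.last L).insertNth (α := fun _ => Bool) c b' := rfl
    simp only [walk, hins]
    rw [dif_pos (show L < L + 1 by omega)]
    rw [show (⟨L, show L < L + 1 by omega⟩ : Fin (L + 1)) = Fin.last L from rfl,
      Fin.insertNth_apply_same]
    have h3 : walk s0 s1 st
        (fun j => if h : j < L + 1 then
          (Fin.last L).insertNth (α := fun _ => Bool) c b' ⟨j, h⟩
          else false) L
        = walk s0 s1 st (fun j => if h : j < L then b' ⟨j, h⟩ else false) L := by
      apply walk_eq_of_agree
      intro j hj
      rw [dif_pos (show j < L + 1 by omega), dif_pos hj]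
      have h2 : (⟨j, show j < L + 1 by omega⟩ : Fin (L + 1))
          = (Fin.last L).succAbove ⟨j, hj⟩ := by
        rw [Fin.succAbove_last]
        rfl
      rw [h2, Fin.insertNth_apply_succAbove]
    rw [h3]
  simp only [hpt]
  rw [Fintype.sum_bool]
  simp only [if_true, if_false, Bool.false_eq_true]
  rw [sum_walk_fiber s0 s1 st L (fun u => if s1 u = w then 1 else 0),
    sum_walk_fiber s0 s1 st L (fun u => if s0 u = w then 1 else 0)]
  simp only [mul_add]
  rw [Finset.sum_add_distrib]
  exact add_comm _ _


lemma main_count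
    (hlev : ∀ v, ¬ Absorbing s0 s1 v → ℓ (s0 v) = ℓ v + 1 ∧ ℓ (s1 v) = ℓ v + 1)
    (st : V) (hst : ℓ st = 0) (m : ℕ) :
    ∀ L, L ≤ m → ∀ v, pcount s0 s1 st (2 ^ m) L v
      = 2 ^ (m - L) * branchCount s0 s1 st L v := by
  intro L
  induction L with
  | zero =>
    intro _ v
    have h0 : ∀ j, (ballConfig s0 s1 st j 0).1 = st := fun j => rfl
    by_cases hv : st = v
    · subst hv
      have hpc : pcount s0 s1 st (2 ^ m) 0 st = 2 ^ m := by
        unfold pcount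
        rw [Finset.filter_true_of_mem (fun j _ => h0 j), Finset.card_range]
      have hbc : branchCount s0 s1 st 0 st = 1 := by
        unfold branchCount
        rw [Finset.filter_true_of_mem (fun b _ =>
          (rfl : walk s0 s1 st (fun j => if h : j < 0 then b ⟨j, h⟩ else false) 0
            = st))]
        simp
      rw [hpc, hbc, Nat.sub_zero, mul_one]
    · have hpc : pcount s0 s1 st (2 ^ m) 0 v = 0 := by
        unfold pcount
        rw [Finset.card_eq_zero, Finset.filter_eq_empty_iff]
        intro j _
        exact fun h => hv h
      have hbc : branchCount s0 s1 st 0 v = 0 := by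
        unfold branchCount
        rw [Finset.card_eq_zero, Finset.filter_eq_empty_iff]
        intro b _
        exact fun h => hv h
      rw [hpc, hbc, mul_zero]
  | succ L ih =>
    intro hL w
    have hL' : L ≤ m := by omega
    have hIH := ih hL'
    have hdec : pcount s0 s1 st (2 ^ m) (L + 1) w
        = ∑ v : V, ((Finset.range (2 ^ m)).filter
            (fun j => (ballConfig s0 s1 st j (L + 1)).1 = w
              ∧ (ballConfig s0 s1 st j L).1 = v)).card := by
      unfold pcount
      rw [Finset.card_eq_sum_card_fiberwise
        (f := fun j => (ballConfig s0 s1 st j L).1) (t := Finset.univ)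
        (fun x _ => Finset.mem_univ _)]
      refine Finset.sum_congr rfl (fun v _ => ?_)
      rw [Finset.filter_filter]
    have hpow : 2 ^ (m - L) = 2 ^ (m - (L + 1)) * 2 := by
      rw [← pow_succ]
      congr 1
      omega
    have heven : ∀ v, pcount s0 s1 st (2 ^ m) L v % 2 = 0 := by
      intro v
      rw [hIH v, hpow]
      have : 2 ^ (m - (L + 1)) * 2 * branchCount s0 s1 st L v
          = 2 * (2 ^ (m - (L + 1)) * branchCount s0 s1 st L v) := by ring
      rw [this]
      exact Nat.mul_mod_right 2 _
    have hdiv : ∀ v, pcount s0 s1 st (2 ^ m) L v / 2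
        = 2 ^ (m - (L + 1)) * branchCount s0 s1 st L v := by
      intro v
      rw [hIH v, hpow]
      have : 2 ^ (m - (L + 1)) * 2 * branchCount s0 s1 st L v
          = (2 ^ (m - (L + 1)) * branchCount s0 s1 st L v) * 2 := by ring
      rw [this, Nat.mul_div_cancel _ (by norm_num)]
    rw [hdec, branchCount_succ s0 s1 st L w, Finset.mul_sum]
    refine Finset.sum_congr rfl (fun v _ => ?_)
    rw [fiber_step s0 s1 ℓ hlev st hst (2 ^ m) L v w (heven v), hdiv v]
    ring

end Aux

/-- Top-level switch records path-count parity: if `ℓ` increases by `1` along every edge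
out of a non-absorbing vertex, `ℓ s = 0`, and `2 ^ m` balls are released from `s` and all
stop, then for every non-absorbing vertex `v` with `ℓ v = m` the final switch state at
`v` equals `N(v) mod 2`. -/
theorem top_level_switch_parity [Fintype V] [DecidableEq V] (s0 s1 : V → V)
    (ℓ : V → ℕ)
    (hlev : ∀ v, ¬ Absorbing s0 s1 v → ℓ (s0 v) = ℓ v + 1 ∧ ℓ (s1 v) = ℓ v + 1)
    (s : V) (hs : ℓ s = 0) (m : ℕ) :
    ∀ v : V, ¬ Absorbing s0 s1 v → ℓ v = m →
      sigmaAfter s0 s1 s (2 ^ m) v = decide (branchCount s0 s1 s m v % 2 = 1) := by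
  intro v hv hm
  have h1 := sigmaAfter_parity s0 s1 ℓ hlev s hs v hv (2 ^ m)
  rw [hm] at h1
  rw [main_count s0 s1 ℓ hlev s hs m m le_rfl v] at h1
  simpa [Nat.sub_self] using h1
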